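/- The connection Ḋ defined on a Riemannian Π-manifold by Ḋₓy = ∇ₓy − (1/2){(∇ₓφ)φy − (∇ₓη)(y)·ξ} − η(y)∇ₓξ is a natural connection, i.e., Ḋφ = Ḋξ = Ḋη = Ḋg = 0. -/

import Mathlib

/-- Algebraic model of a Riemannian Π-manifold: `V` is the module of vector fields
over the commutative ring `C` of (smooth) functions, `g` the metric, `(phi, xi, eta)`
the Π-structure, `d` the directional-derivative action of vector fields on functions,
`nabla` the Levi-Civita connection (torsion-free w.r.t. the bracket `lie` and
metric-compatible), together with the standard identities of the Π-structure. -/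
structure RPM (C : Type*) (V : Type*) [CommRing C] [Algebra ℝ C]
    [AddCommGroup V] [Module C V] where
  g : V →ₗ[C] V →ₗ[C] C
  phi : V →ₗ[C] V
  xi : V
  eta : V →ₗ[C] C
  d : V → C → C
  nabla : V → V → V
  lie : V → V → V
  g_symm : ∀ x y, g x y = g y x
  phi_xi : phi xi = 0
  phi_sq : ∀ x, phi (phi x) = x - eta x • xi
  eta_phi : ∀ x, eta (phi x) = 0
  eta_xi : eta xi = 1
  g_phi_phi : ∀ x y, g (phi x) (phi y) = g x y - eta x * eta y
  g_phi : ∀ x y, g (phi x) y = g x (phi y)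
  g_xi : ∀ x, g x xi = eta x
  d_one : ∀ x, d x 1 = 0
  d_mul : ∀ x f h, d x (f * h) = f * d x h + h * d x f
  nabla_add_left : ∀ x y z, nabla (x + y) z = nabla x z + nabla y z
  nabla_smul_left : ∀ (f : C) (x y : V), nabla (f • x) y = f • nabla x y
  nabla_add_right : ∀ x y z, nabla x (y + z) = nabla x y + nabla x z
  nabla_leibniz : ∀ (x : V) (f : C) (y : V), nabla x (f • y) = d x f • y + f • nabla x y
  torsion_free : ∀ x y, nabla x y - nabla y x = lie x y
  metric_compat : ∀ x y z, d x (g y z) = g (nabla x y) z + g y (nabla x z)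

namespace RPM

variable {C : Type*} {V : Type*} [CommRing C] [Algebra ℝ C] [AddCommGroup V] [Module C V]

/-- The fundamental tensor `F(x,y,z) = g((∇ₓφ)y, z)`. -/
def F (M : RPM C V) (x y z : V) : C :=
  M.g (M.nabla x (M.phi y) - M.phi (M.nabla x y)) z

/-- The constant function 1/2. -/
noncomputable def half (M : RPM C V) : C := algebraMap ℝ C (1 / 2)

/-- The first natural connection
`Ḋₓy = ∇ₓy − (1/2){(∇ₓφ)(φy) − (∇ₓη)(y)·ξ} − η(y)∇ₓξ`, where
`(∇ₓφ)(φy) = ∇ₓ(φ²y) − φ(∇ₓ(φy))` and `(∇ₓη)(y) = g(∇ₓξ, y)`. -/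
noncomputable def D1 (M : RPM C V) (x y : V) : V :=
  M.nabla x y
    - M.half • ((M.nabla x (M.phi (M.phi y)) - M.phi (M.nabla x (M.phi y)))
        - M.g (M.nabla x M.xi) y • M.xi)
    - M.eta y • M.nabla x M.xi

/-- The torsion of the first natural connection. -/
noncomputable def T1 (M : RPM C V) (x y : V) : V := M.D1 x y - M.D1 y x - M.lie x y

/-- The Lee form ω = F(ξ,ξ,·). -/
def omegaF (M : RPM C V) (z : V) : C := M.F M.xi M.xi z

end RPM

/-!
Since `φ² = I − η ⊗ ξ`, expanding `∇ₓ(φ²y)` and `(∇ₓη)(y)` turns `Ḋ` into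
`Ḋₓy = ½ (∇ₓy + φ∇ₓφy + η(∇ₓy) ξ − η(y) ∇ₓξ) + g(∇ₓξ, y) ξ`.
In this form each of `Ḋφ = 0`, `Ḋξ = 0`, `Ḋη = 0` and `Ḋg = 0` is a linear identity
between `∇`-terms, closed by the consequences `g(∇ₓξ, ξ) = 0`, `η(∇ₓφy) = −g(∇ₓξ, φy)` and
`g(∇ₓφy, φz) + g(φy, ∇ₓφz) = x(g(y, z)) − η(z) x(η y) − η(y) x(η z)`
of metric compatibility.
-/

namespace RPM

variable {C : Type*} {V : Type*} [CommRing C] [Algebra ℝ C] [AddCommGroup V] [Module C V]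
  (M : RPM C V)

lemma two_mul_half : (2 : C) * M.half = 1 := by
  rw [half, ← map_ofNat (algebraMap ℝ C) 2, ← map_mul]
  norm_num

lemma d_zero (x : V) : M.d x 0 = 0 := by
  simpa using M.d_mul x 0 0

lemma nabla_sub (x y z : V) : M.nabla x (y - z) = M.nabla x y - M.nabla x z :=
  eq_sub_of_add_eq (by rw [← M.nabla_add_right, sub_add_cancel])

lemma nabla_zero (x : V) : M.nabla x 0 = 0 := by
  simpa using M.nabla_sub x 0 0

lemma g_xi_left (y : V) : M.g M.xi y = M.eta y := by
  rw [M.g_symm, M.g_xi]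

lemma g_nabla_xi_xi (x : V) : M.g (M.nabla x M.xi) M.xi = 0 := by
  have h := M.metric_compat x M.xi M.xi
  rw [M.g_xi, M.eta_xi, M.d_one, M.g_symm M.xi] at h
  linear_combination (-M.half) * h - M.g (M.nabla x M.xi) M.xi * M.two_mul_half

lemma eta_nabla_xi (x : V) : M.eta (M.nabla x M.xi) = 0 := by
  rw [← M.g_xi, M.g_nabla_xi_xi]

lemma d_eta (x y : V) :
    M.d x (M.eta y) = M.eta (M.nabla x y) + M.g (M.nabla x M.xi) y := by
  rw [← M.g_xi, M.metric_compat, M.g_xi, M.g_symm y]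

lemma eta_nabla_phi (x y : V) :
    M.eta (M.nabla x (M.phi y)) = -M.g (M.nabla x M.xi) (M.phi y) := by
  have h := M.d_eta x (M.phi y)
  rw [M.eta_phi, M.d_zero] at h
  linear_combination -h

lemma nabla_phi_phi (x y : V) : M.nabla x (M.phi (M.phi y)) =
    M.nabla x y - M.d x (M.eta y) • M.xi - M.eta y • M.nabla x M.xi := by
  rw [M.phi_sq, M.nabla_sub, M.nabla_leibniz]
  abel

lemma metric_compat_phi (x y z : V) :
    M.g (M.nabla x (M.phi y)) (M.phi z) + M.g (M.phi y) (M.nabla x (M.phi z)) =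
      M.d x (M.g y z) - M.eta z * M.d x (M.eta y) - M.eta y * M.d x (M.eta z) := by
  rw [← M.metric_compat, ← M.g_phi, M.metric_compat, M.nabla_phi_phi, M.phi_sq,
    M.metric_compat, M.d_eta x z]
  simp only [map_sub, map_smul, LinearMap.sub_apply, LinearMap.smul_apply, smul_eq_mul,
    M.g_xi_left]
  ring

lemma D1_eq (x y : V) : M.D1 x y =
    M.half • (M.nabla x y + M.phi (M.nabla x (M.phi y)) + M.eta (M.nabla x y) • M.xi
      - M.eta y • M.nabla x M.xi) + M.g (M.nabla x M.xi) y • M.xi := by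
  rw [D1, M.nabla_phi_phi, M.d_eta]
  linear_combination (norm := module)
    M.two_mul_half • (M.g (M.nabla x M.xi) y • M.xi + M.eta y • M.nabla x M.xi - M.nabla x y)

lemma D1_phi (x y : V) : M.D1 x (M.phi y) = M.phi (M.D1 x y) := by
  rw [D1_eq, D1_eq, M.nabla_phi_phi]
  simp only [map_add, map_sub, map_smul, M.phi_sq, M.eta_phi, M.phi_xi, smul_zero, zero_smul]
  linear_combination (norm := module) (2 * M.half * M.eta_nabla_phi x y) • M.xi
    - M.two_mul_half • (M.g (M.nabla x M.xi) (M.phi y) • M.xi)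

lemma D1_xi (x : V) : M.D1 x M.xi = 0 := by
  simp [D1_eq, M.phi_xi, M.nabla_zero, M.eta_nabla_xi, M.eta_xi, M.g_nabla_xi_xi]

lemma d_eta_eq_eta_D1 (x y : V) : M.d x (M.eta y) = M.eta (M.D1 x y) := by
  simp only [D1_eq, map_add, map_sub, map_smul, smul_eq_mul, M.eta_phi, M.eta_xi,
    M.eta_nabla_xi]
  linear_combination M.d_eta x y - M.eta (M.nabla x y) * M.two_mul_half

lemma d_g_eq_g_D1_add_g_D1 (x y z : V) :
    M.d x (M.g y z) = M.g (M.D1 x y) z + M.g y (M.D1 x z) := by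
  simp only [D1_eq, map_add, map_sub, map_smul, LinearMap.add_apply, LinearMap.sub_apply,
    LinearMap.smul_apply, smul_eq_mul, M.g_xi, M.g_xi_left]
  rw [M.g_phi, ← M.g_phi y, M.g_symm y (M.nabla x M.xi)]
  linear_combination M.half * M.metric_compat x y z - M.half * M.metric_compat_phi x y z
    + M.half * M.eta z * M.d_eta x y + M.half * M.eta y * M.d_eta x z
    - (M.d x (M.g y z) - M.eta z * M.g (M.nabla x M.xi) y - M.eta y * M.g (M.nabla x M.xi) z)
      * M.two_mul_half

end RPM

open RPM

variable {C : Type*} {V : Type*} [CommRing C] [Algebra ℝ C] [AddCommGroup V] [Module C V]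

/-- The connection `Ḋₓy = ∇ₓy − (1/2){(∇ₓφ)(φy) − (∇ₓη)(y)ξ} − η(y)∇ₓξ`
is a natural connection: `Ḋφ = Ḋξ = Ḋη = Ḋg = 0`. -/
theorem stmt11 (M : RPM C V) :
    (∀ x y, M.D1 x (M.phi y) = M.phi (M.D1 x y)) ∧
    (∀ x, M.D1 x M.xi = 0) ∧
    (∀ x y, M.d x (M.eta y) = M.eta (M.D1 x y)) ∧
    (∀ x y z, M.d x (M.g y z) = M.g (M.D1 x y) z + M.g y (M.D1 x z)) :=
  ⟨M.D1_phi, M.D1_xi, M.d_eta_eq_eta_D1, M.d_g_eq_g_D1_add_g_D1⟩
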